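/- arXiv:0910.2768 — 3 statements merged into one kernel-verified Lean document; each statement's English description precedes it below -/
import Mathlib

section
/- The integral ∫₀¹ (1/√(t(1-t²)) - 2√(t/(1-t²))) dt is strictly positive; equivalently, ∫₀¹ dt/√(t(1-t²)) > 2·∫₀¹ √(t/(1-t²)) dt. -/
/-! With `g t = t * (1 - t ^ 2)` one has `√(t / (1 - t ^ 2)) = t / √(g t)`, so the integrand is
`(1 - 2 t) / √(g t)`. Folding `[1/2, 1]` onto `[0, 1/2]` by `t ↦ 1 - t` turns it into
`(1 - 2 t) (1 / √(g t) - 1 / √(g (1 - t)))`, which is positive on `(0, 1/2)` because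
`g (1 - t) - g t = t (1 - t) (1 - 2 t)`. All integrals converge since
`1 / √(g t) ≤ 1 / √t + 1 / √(1 - t)`. -/

open Real MeasureTheory Set

lemma one_le_sqrt_add_sqrt {a b : ℝ} (ha : 0 ≤ a) (hb : 0 ≤ b) (hab : 1 ≤ a + b) :
    1 ≤ √a + √b := by
  nlinarith [sq_sqrt ha, sq_sqrt hb, sqrt_nonneg a, sqrt_nonneg b]

lemma one_div_sqrt_mul_le {a b : ℝ} (ha : 0 < a) (hb : 0 < b) (hab : 1 ≤ a + b) :
    1 / √(a * b) ≤ 1 / √a + 1 / √b := by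
  have hsum := one_le_sqrt_add_sqrt ha.le hb.le hab
  have hsa := sqrt_pos.2 ha
  have hsb := sqrt_pos.2 hb
  rw [sqrt_mul ha.le, div_add_div _ _ hsa.ne' hsb.ne']
  gcongr
  linarith

lemma integrableOn_one_div_sqrt : IntegrableOn (fun t : ℝ => 1 / √t) (Ioo 0 1) := by
  refine ((intervalIntegral.integrableOn_Ioo_rpow_iff one_pos).2
    (by norm_num : (-1 : ℝ) < -(1 / 2))).congr_fun (fun t ht => ?_) measurableSet_Ioo
  dsimp only
  rw [rpow_neg ht.1.le, sqrt_eq_rpow, inv_eq_one_div]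

lemma integrableOn_one_div_sqrt_one_sub :
    IntegrableOn (fun t : ℝ => 1 / √(1 - t)) (Ioo 0 1) := by
  have h :=
    (intervalIntegrable_iff_integrableOn_Ioo_of_le zero_le_one).2 integrableOn_one_div_sqrt
  rw [← intervalIntegrable_iff_integrableOn_Ioo_of_le zero_le_one]
  simpa using (h.comp_sub_left 1).symm

lemma one_div_sqrt_mul_one_sub_sq_le {t : ℝ} (ht : t ∈ Ioo (0 : ℝ) 1) :
    1 / √(t * (1 - t ^ 2)) ≤ 1 / √t + 1 / √(1 - t) := by
  obtain ⟨ht0, ht1⟩ := ht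
  calc 1 / √(t * (1 - t ^ 2)) ≤ 1 / √(t * (1 - t)) := by
        gcongr
        nlinarith
    _ ≤ 1 / √t + 1 / √(1 - t) := one_div_sqrt_mul_le ht0 (by linarith) (by linarith)

lemma integrableOn_one_div_sqrt_mul_one_sub_sq :
    IntegrableOn (fun t : ℝ => 1 / √(t * (1 - t ^ 2))) (Ioo 0 1) := by
  refine (integrableOn_one_div_sqrt.add integrableOn_one_div_sqrt_one_sub).mono'
    (by fun_prop : Measurable _).aestronglyMeasurable ?_
  filter_upwards [ae_restrict_mem measurableSet_Ioo] with t ht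
  rw [norm_of_nonneg (by positivity)]
  exact one_div_sqrt_mul_one_sub_sq_le ht

lemma sqrt_div_one_sub_sq {t : ℝ} (ht : 0 ≤ t) :
    √(t / (1 - t ^ 2)) = t / √(t * (1 - t ^ 2)) := by
  rcases ht.eq_or_lt with rfl | ht
  · simp
  rw [← sqrt_sq ht.le, ← sqrt_div (sq_nonneg t), sqrt_sq ht.le, sq, mul_div_mul_left _ _ ht.ne']

lemma integrableOn_sqrt_div_one_sub_sq :
    IntegrableOn (fun t : ℝ => √(t / (1 - t ^ 2))) (Ioo 0 1) := by
  refine integrableOn_one_div_sqrt_mul_one_sub_sq.mono'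
    (by fun_prop : Measurable _).aestronglyMeasurable ?_
  filter_upwards [ae_restrict_mem measurableSet_Ioo] with t ht
  rw [norm_of_nonneg (sqrt_nonneg _), sqrt_div_one_sub_sq ht.1.le]
  gcongr
  exact ht.2.le

lemma one_div_sqrt_sub_two_mul_sqrt_div {t : ℝ} (ht : 0 ≤ t) :
    1 / √(t * (1 - t ^ 2)) - 2 * √(t / (1 - t ^ 2)) = (1 - 2 * t) / √(t * (1 - t ^ 2)) := by
  rw [sqrt_div_one_sub_sq ht]
  ring

theorem intervalIntegral.integral_pos_of_add_comp_sub_pos {f : ℝ → ℝ} {a b : ℝ}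
    (hab : a < b) (hf : IntervalIntegrable f volume a b)
    (hpos : ∀ x ∈ Ioo a ((a + b) / 2), 0 < f x + f (a + b - x)) :
    0 < ∫ x in a..b, f x := by
  have hmid : (a + b) / 2 ∈ uIcc a b := mem_uIcc.2 (Or.inl ⟨by linarith, by linarith⟩)
  have hl := hf.mono_set (uIcc_subset_uIcc_left hmid)
  have hr := hf.mono_set (uIcc_subset_uIcc_right hmid)
  have hr' : IntervalIntegrable (fun x => f (a + b - x)) volume a ((a + b) / 2) := by
    have hhalf : a + b - (a + b) / 2 = (a + b) / 2 := by ring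
    simpa [hhalf] using (hr.comp_sub_left (a + b)).symm
  have hfold : ∫ x in (a + b) / 2..b, f x = ∫ x in a..(a + b) / 2, f (a + b - x) := by
    rw [integral_comp_sub_left]
    ring_nf
  rw [← integral_add_adjacent_intervals hl hr, hfold, ← integral_add hl hr']
  exact intervalIntegral_pos_of_pos_on (hl.add hr') hpos (by linarith)

lemma mul_one_sub_sq_lt_of_lt_half {x : ℝ} (hx0 : 0 < x) (hx : x < 1 / 2) :
    x * (1 - x ^ 2) < (1 - x) * (1 - (1 - x) ^ 2) := by
  have hdiff : (1 - x) * (1 - (1 - x) ^ 2) - x * (1 - x ^ 2) = x * (1 - x) * (1 - 2 * x) := by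
    ring
  have : 0 < x * (1 - x) * (1 - 2 * x) := by
    have : 0 < 1 - x := by linarith
    have : 0 < 1 - 2 * x := by linarith
    positivity
  linarith

lemma integral_one_sub_two_mul_div_sqrt_pos :
    0 < ∫ t in Ioo (0 : ℝ) 1, (1 - 2 * t) / √(t * (1 - t ^ 2)) := by
  have hint :
      IntervalIntegrable (fun t : ℝ => (1 - 2 * t) / √(t * (1 - t ^ 2))) volume 0 1 := by
    rw [intervalIntegrable_iff_integrableOn_Ioo_of_le zero_le_one]
    exact (integrableOn_one_div_sqrt_mul_one_sub_sq.sub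
      (integrableOn_sqrt_div_one_sub_sq.const_mul 2)).congr_fun
      (fun t ht => one_div_sqrt_sub_two_mul_sqrt_div ht.1.le) measurableSet_Ioo
  rw [← integral_Ioc_eq_integral_Ioo, ← intervalIntegral.integral_of_le zero_le_one]
  refine intervalIntegral.integral_pos_of_add_comp_sub_pos one_pos hint fun x hx => ?_
  obtain ⟨hx0, hx⟩ : 0 < x ∧ x < 1 / 2 := by simpa using hx
  have hg := mul_one_sub_sq_lt_of_lt_half hx0 hx
  have hgx : 0 < x * (1 - x ^ 2) := mul_pos hx0 (by nlinarith)
  have hlt :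
      (1 - 2 * x) / √((1 - x) * (1 - (1 - x) ^ 2)) < (1 - 2 * x) / √(x * (1 - x ^ 2)) := by
    gcongr
    linarith
  rw [zero_add, show 1 - 2 * (1 - x) = -(1 - 2 * x) by ring, neg_div]
  linarith

theorem stmt2 :
    (0 < ∫ t in Set.Ioo (0:ℝ) 1,
        (1 / Real.sqrt (t * (1 - t^2)) - 2 * Real.sqrt (t / (1 - t^2)))) ∧
    (∫ t in Set.Ioo (0:ℝ) 1, 1 / Real.sqrt (t * (1 - t^2))) >
      2 * ∫ t in Set.Ioo (0:ℝ) 1, Real.sqrt (t / (1 - t^2)) := by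
  have hpos :
      0 < ∫ t in Ioo (0 : ℝ) 1, (1 / √(t * (1 - t ^ 2)) - 2 * √(t / (1 - t ^ 2))) := by
    rw [setIntegral_congr_fun measurableSet_Ioo
      fun t ht => one_div_sqrt_sub_two_mul_sqrt_div ht.1.le]
    exact integral_one_sub_two_mul_div_sqrt_pos
  refine ⟨hpos, ?_⟩
  rw [integral_sub integrableOn_one_div_sqrt_mul_one_sub_sq
    (integrableOn_sqrt_div_one_sub_sq.const_mul 2), integral_const_mul] at hpos
  linarith
end

section
/- For every integer k ≥ 2, the number c_k := √(B_k/(2 A_k)), where A_k = ∫₀¹ (t/(1-t²))^{1/(k+1)} dt and B_k = ∫₀¹ (t(1-t²)^k)^{-1/(k+1)} dt, satisfies c_k > (1/√2) · k^{1/(2(k+1))} · (k/(k-1))^{(k-1)/(2(k+1))}. -/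
/-!
The integrand of `B_k` is the integrand of `A_k` times
`(t ^ 2 * (1 - t ^ 2) ^ (k - 1)) ^ (-1 / (k + 1))`. Since
`x * (1 - x) ^ (k - 1) ≤ (k - 1) ^ (k - 1) / k ^ k`, with equality only at `x = 1 / k`, this factor
exceeds `R_k = (k ^ k / (k - 1) ^ (k - 1)) ^ (1 / (k + 1))` almost everywhere, so `B_k > R_k A_k`,
and the claimed lower bound is exactly `√(R_k / 2)`.
-/

open Real MeasureTheory Set

lemma integrableOn_rpow_mul_one_sub_rpow {a b : ℝ} (ha : -1 < a) (hb : -1 < b) :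
    IntegrableOn (fun x : ℝ => x ^ a * (1 - x) ^ b) (Ioo 0 1) := by
  have h := Complex.betaIntegral_convergent (u := a + 1) (v := b + 1)
    (by simp; linarith) (by simp; linarith)
  rw [intervalIntegrable_iff_integrableOn_Ioo_of_le zero_le_one] at h
  refine IntegrableOn.congr_fun h.norm (fun x hx => ?_) measurableSet_Ioo
  have h1 : (1 : ℂ) - x = ((1 - x : ℝ) : ℂ) := by push_cast; ring
  rw [norm_mul, h1, Complex.norm_cpow_eq_rpow_re_of_pos hx.1,
    Complex.norm_cpow_eq_rpow_re_of_pos (sub_pos.2 hx.2)]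
  simp

lemma integrableOn_rpow_mul_one_sub_sq_rpow {a b : ℝ} (ha : -1 < a) (hb : -1 < b) :
    IntegrableOn (fun x : ℝ => x ^ a * (1 - x ^ 2) ^ b) (Ioo 0 1) := by
  have hcont : ContinuousOn (fun x : ℝ => (1 + x) ^ b) (Icc 0 1) :=
    ContinuousOn.rpow_const (by fun_prop) fun x hx => Or.inl (by linarith [hx.1])
  refine ((integrableOn_rpow_mul_one_sub_rpow ha hb).mul_continuousOn_of_subset hcont
    measurableSet_Ioo isCompact_Icc Ioo_subset_Icc_self).congr_fun (fun x hx => ?_)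
    measurableSet_Ioo
  dsimp only
  rw [mul_assoc, ← mul_rpow (by linarith [hx.2]) (by linarith [hx.1])]
  ring_nf

lemma integrableOn_div_one_sub_sq_rpow {p : ℝ} (hp : -1 < p) (hp' : p < 1) :
    IntegrableOn (fun t : ℝ => (t / (1 - t ^ 2)) ^ p) (Ioo 0 1) := by
  refine (integrableOn_rpow_mul_one_sub_sq_rpow hp (by linarith : -1 < -p)).congr_fun
    (fun t ht => ?_) measurableSet_Ioo
  have : 0 < 1 - t ^ 2 := by nlinarith [ht.1, ht.2]
  dsimp only
  rw [div_rpow ht.1.le this.le, rpow_neg this.le, div_eq_mul_inv]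

lemma integrableOn_mul_one_sub_sq_pow_rpow {m : ℕ} {q : ℝ} (hq : -1 < q) (hmq : -1 < m * q) :
    IntegrableOn (fun t : ℝ => (t * (1 - t ^ 2) ^ m) ^ q) (Ioo 0 1) := by
  refine (integrableOn_rpow_mul_one_sub_sq_rpow hq hmq).congr_fun
    (fun t ht => ?_) measurableSet_Ioo
  have : 0 < 1 - t ^ 2 := by nlinarith [ht.1, ht.2]
  dsimp only
  rw [mul_rpow ht.1.le (by positivity), rpow_natCast_mul this.le]

lemma setIntegral_pos_of_ae_pos {X : Type*} [MeasurableSpace X] {μ : Measure X} {s : Set X}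
    {f : X → ℝ} (hs : μ s ≠ 0) (hfi : IntegrableOn f s μ) (hf : ∀ᵐ x ∂μ.restrict s, 0 < f x) :
    0 < ∫ x in s, f x ∂μ := by
  have hsupp : (μ.restrict s) (Function.support f)ᶜ = 0 :=
    measure_mono_null (fun x hx hpos => (ne_of_gt hpos) (Function.notMem_support.1 hx))
      (ae_iff.1 hf)
  rw [integral_pos_iff_support_of_nonneg_ae (hf.mono fun _ => le_of_lt) hfi,
    measure_congr (ae_eq_univ.2 hsupp), Measure.restrict_apply_univ]
  exact pos_iff_ne_zero.2 hs

lemma mul_one_sub_pow_lt (n : ℕ) {x : ℝ} (hx0 : 0 ≤ x) (hx1 : x ≤ 1) (hx : x ≠ 1 / (n + 1)) :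
    x * (1 - x) ^ n < n ^ n / (n + 1) ^ (n + 1) := by
  -- with `y = (n + 1) x` the claim reads `y (n + 1 - y) ^ n < n ^ n`;
  -- bound `y < exp (y - 1)` and `(n + 1 - y) ^ n ≤ n ^ n exp (1 - y)`
  set y := (n + 1) * x with hy
  have hy1 : y ≠ 1 := by
    intro h; apply hx; field_simp; linarith
  have hexp : y * exp (1 - y) < 1 := by
    have := add_one_lt_exp (sub_ne_zero.2 hy1)
    calc y * exp (1 - y) < exp (y - 1) * exp (1 - y) := by
          gcongr; linarith
      _ = 1 := by rw [← exp_add]; simp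
  have hpow : (n + 1 - y) ^ n ≤ n ^ n * exp (1 - y) := by
    rcases n.eq_zero_or_pos with rfl | hn
    · simp at hy ⊢; linarith
    · have hn' : (0 : ℝ) < n := by exact_mod_cast hn
      have := one_sub_div_pow_le_exp_neg (n := n) (t := y - 1) (by rw [hy]; nlinarith)
      calc (n + 1 - y) ^ n = n ^ n * (1 - (y - 1) / n) ^ n := by
            rw [← mul_pow]; congr 1; field_simp; ring
        _ ≤ n ^ n * exp (1 - y) := by
            rw [neg_sub] at this; gcongr
  rw [lt_div_iff₀ (by positivity)]
  calc x * (1 - x) ^ n * (n + 1) ^ (n + 1) = y * (n + 1 - y) ^ n := by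
        rw [hy, show (n + 1 : ℝ) - (n + 1) * x = (n + 1) * (1 - x) by ring, mul_pow, pow_succ]
        ring
    _ ≤ y * (n ^ n * exp (1 - y)) := by gcongr
    _ = n ^ n * (y * exp (1 - y)) := by ring
    _ < n ^ n * 1 := by gcongr; exact_mod_cast Nat.pow_self_pos
    _ = n ^ n := mul_one _

lemma integral_div_one_sub_sq_rpow_pos {p : ℝ} (hp : -1 < p) (hp' : p < 1) :
    0 < ∫ t in Ioo (0 : ℝ) 1, (t / (1 - t ^ 2)) ^ p :=
  setIntegral_pos_of_ae_pos (by simp) (integrableOn_div_one_sub_sq_rpow hp hp') <|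
    ae_restrict_of_forall_mem measurableSet_Ioo fun t ht =>
      rpow_pos_of_pos (div_pos ht.1 (by nlinarith [ht.1, ht.2])) _

/-- The minimum over `0 < t < 1` of the ratio of the integrand of `B_k` to that of `A_k`,
attained at `t ^ 2 = 1 / k`. -/
noncomputable def ratioMin (k : ℕ) : ℝ :=
  ((k : ℝ) ^ k / ((k : ℝ) - 1) ^ (k - 1)) ^ ((1 : ℝ) / (k + 1))

lemma ratioMin_mul_lt {k : ℕ} (hk : 1 ≤ k) {t : ℝ} (ht0 : 0 < t) (ht1 : t < 1)
    (ht : t ^ 2 ≠ 1 / k) :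
    ratioMin k * (t / (1 - t ^ 2)) ^ ((1 : ℝ) / (k + 1)) <
      (t * (1 - t ^ 2) ^ k) ^ (-(1 : ℝ) / (k + 1)) := by
  set p : ℝ := 1 / (k + 1)
  have hu : 0 < 1 - t ^ 2 := by nlinarith
  have hk' : (1 : ℝ) ≤ k := by exact_mod_cast hk
  have hX : t ^ 2 * (1 - t ^ 2) ^ (k - 1) < ((k : ℝ) - 1) ^ (k - 1) / k ^ k := by
    have := mul_one_sub_pow_lt (k - 1) (x := t ^ 2) (by positivity) (by nlinarith)
      (by rwa [Nat.cast_sub hk, Nat.cast_one, sub_add_cancel])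
    rwa [Nat.cast_sub hk, Nat.cast_one, sub_add_cancel, Nat.sub_add_cancel hk] at this
  have hg : (t * (1 - t ^ 2) ^ k) ^ (-p) =
      (t ^ 2 * (1 - t ^ 2) ^ (k - 1)) ^ (-p) * (t / (1 - t ^ 2)) ^ p := by
    have : t * (1 - t ^ 2) ^ k = t ^ 2 * (1 - t ^ 2) ^ (k - 1) / (t / (1 - t ^ 2)) := by
      rw [← Nat.sub_add_cancel hk, pow_succ]
      field_simp
      simp
    rw [this, div_rpow (by positivity) (by positivity), rpow_neg (div_pos ht0 hu).le,
      div_inv_eq_mul]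
  have hR : ratioMin k = (((k : ℝ) - 1) ^ (k - 1) / k ^ k) ^ (-p) := by
    rw [ratioMin, rpow_neg (by positivity), ← inv_rpow (by positivity), inv_div]
  rw [neg_div, hg, hR]
  gcongr ?_ * _
  exact rpow_lt_rpow_of_neg (by positivity) hX (by simp [p]; positivity)

lemma ratioMin_mul_integral_lt {k : ℕ} (hk : 1 ≤ k) :
    ratioMin k * ∫ t in Ioo (0 : ℝ) 1, (t / (1 - t ^ 2)) ^ ((1 : ℝ) / (k + 1)) <
      ∫ t in Ioo (0 : ℝ) 1, (t * (1 - t ^ 2) ^ k) ^ (-(1 : ℝ) / (k + 1)) := by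
  have hk' : (1 : ℝ) ≤ k := by exact_mod_cast hk
  have hf := integrableOn_div_one_sub_sq_rpow (p := 1 / (k + 1))
    (by linarith [Nat.one_div_pos_of_nat (α := ℝ) (n := k)])
    (by rw [div_lt_one (by positivity)]; linarith)
  have hg := integrableOn_mul_one_sub_sq_pow_rpow (m := k) (q := -1 / (k + 1))
    (by rw [lt_div_iff₀ (by positivity)]; linarith)
    (by rw [mul_div_assoc', lt_div_iff₀ (by positivity)]; linarith)
  rw [← integral_const_mul, ← sub_pos, ← integral_sub hg (hf.const_mul _)]
  refine setIntegral_pos_of_ae_pos (by simp) (hg.sub (hf.const_mul _)) ?_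
  filter_upwards [ae_restrict_mem measurableSet_Ioo,
    ae_restrict_of_ae (volume.ae_ne √(1 / k))] with t ht hne
  exact sub_pos.2 (ratioMin_mul_lt hk ht.1 ht.2 fun h => hne (by rw [← h, sqrt_sq ht.1.le]))

lemma ratioMin_eq {k : ℕ} (hk : 1 ≤ k) :
    ratioMin k =
      (k : ℝ) ^ ((1 : ℝ) / (k + 1)) * ((k : ℝ) / (k - 1)) ^ (((k : ℝ) - 1) / (k + 1)) := by
  have hk0 : (0 : ℝ) < k := by exact_mod_cast hk
  have hk1 : (0 : ℝ) ≤ k - 1 := sub_nonneg.2 (by exact_mod_cast hk)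
  have hexp : (k : ℝ) * (1 / (k + 1)) = 1 / (k + 1) + (k - 1) / (k + 1) := by ring
  rw [ratioMin, div_rpow (by positivity) (by positivity), div_rpow hk0.le hk1, ← rpow_natCast,
    ← rpow_natCast, ← rpow_mul hk0.le, ← rpow_mul hk1, Nat.cast_sub hk, Nat.cast_one, hexp,
    rpow_add hk0, mul_div_assoc, mul_one_div]

lemma sq_lowerBound_eq_ratioMin_div_two {k : ℕ} (hk : 1 ≤ k) :
    ((1 / √2) * (k : ℝ) ^ ((1 : ℝ) / (2 * ((k : ℝ) + 1))) *
      ((k : ℝ) / ((k : ℝ) - 1)) ^ (((k : ℝ) - 1) / (2 * ((k : ℝ) + 1)))) ^ 2 = ratioMin k / 2 := by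
  have hk1 : (0 : ℝ) ≤ k - 1 := sub_nonneg.2 (by exact_mod_cast hk)
  rw [mul_pow, mul_pow, div_pow, one_pow, sq_sqrt zero_le_two, ← rpow_mul_natCast (by positivity),
    ← rpow_mul_natCast (div_nonneg (Nat.cast_nonneg k) hk1), ratioMin_eq hk]
  have e1 : (1 : ℝ) / (2 * (k + 1)) * (2 : ℕ) = 1 / (k + 1) := by field_simp; norm_num
  have e2 : ((k : ℝ) - 1) / (2 * (k + 1)) * (2 : ℕ) = (k - 1) / (k + 1) := by field_simp; norm_num
  rw [e1, e2]
  ring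

theorem stmt4 (k : ℕ) (hk : 2 ≤ k) (A B : ℝ)
    (hA : A = ∫ t in Set.Ioo (0:ℝ) 1, (t / (1 - t^2)) ^ ((1:ℝ)/((k:ℝ)+1)))
    (hB : B = ∫ t in Set.Ioo (0:ℝ) 1, (t * (1 - t^2)^k) ^ (-(1:ℝ)/((k:ℝ)+1))) :
    Real.sqrt (B / (2 * A)) >
      (1 / Real.sqrt 2) * (k:ℝ) ^ ((1:ℝ)/(2*((k:ℝ)+1))) *
        ((k:ℝ)/((k:ℝ)-1)) ^ (((k:ℝ)-1)/(2*((k:ℝ)+1))) := by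
  have hk1 : 1 ≤ k := by omega
  have hA_pos : 0 < A := hA ▸ integral_div_one_sub_sq_rpow_pos
    (by linarith [Nat.one_div_pos_of_nat (α := ℝ) (n := k)])
    (by rw [div_lt_one (by positivity)]; norm_cast; omega)
  have hBA : ratioMin k * A < B := hA ▸ hB ▸ ratioMin_mul_integral_lt hk1
  apply lt_sqrt_of_sq_lt
  rw [sq_lowerBound_eq_ratioMin_div_two hk1, div_lt_div_iff₀ two_pos (by positivity)]
  linarith
end

section
/- Let k ≥ 1 and define q(t) = (-i/sin(kπ/(k+1)))·(cos θ₀(t) - ψ^{-2} cos θ∞(t)) where ψ = e^{ikπ/(2(k+1))}, θ₀(t) = (π/(2k+2))·k√(1+4t(k+1)/k), θ∞(t) = (π/(2k+2))·k√(1-4t(k+1)/k). Then |q(0)|² = 1, (d/dt)|q|²(0) = 0, and (d²/dt²)|q|²(0) = (4(k+1)π/k)·tan(kπ/(2k+2)) > 0; hence |q(t)| > 1 for all t ≠ 0 sufficiently small. -/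
/-! Write a = kπ/(2k+2) and c = 4(k+1)/k, so that θ₀ = a√(1+ct), θ∞ = a√(1-ct) and
kπ/(k+1) = 2a. At t = 0 both cosines equal cos a, giving |q(0)|² = 2cos²a (1 - cos 2a)/sin² 2a = 1;
their first-order variations are opposite, which kills the first derivative, and the second
derivative comes out as a c²/2 · tan a > 0. A critical point with positive second derivative is a
strict local minimum, whence |q(t)|² > 1 for small t ≠ 0. -/

open Real Filter Topology Set

/-- A strict form of `isLocalMin_of_deriv_deriv_pos`. -/
theorem eventually_nhdsNE_lt_of_hasDerivAt_deriv_pos {f f' : ℝ → ℝ} {x₀ c : ℝ}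
    (hf : ∀ᶠ x in 𝓝 x₀, HasDerivAt f (f' x) x) (h₀ : f' x₀ = 0) (hf' : HasDerivAt f' c x₀)
    (hc : 0 < c) : ∀ᶠ x in 𝓝[≠] x₀, f x₀ < f x := by
  have hsign := eventually_nhdsWithin_sign_eq_of_deriv_pos (f := f') (hf'.deriv ▸ hc) h₀
  obtain ⟨ε, hε, hball⟩ := Metric.eventually_nhds_iff_ball.mp (hf.and hsign)
  filter_upwards [nhdsWithin_le_nhds (Metric.ball_mem_nhds x₀ hε), self_mem_nhdsWithin]
    with x hx (hne : x ≠ x₀)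
  have hsub : uIcc x x₀ ⊆ Metric.ball x₀ ε :=
    (convex_ball x₀ ε).ordConnected.uIcc_subset hx (Metric.mem_ball_self hε)
  have hcont : ContinuousOn f (uIcc x x₀) := fun y hy ↦
    (hball y (hsub hy)).1.continuousAt.continuousWithinAt
  rcases hne.lt_or_gt with hlt | hgt
  · rw [uIcc_of_le hlt.le] at hsub hcont
    refine strictAntiOn_of_deriv_neg (convex_Icc x x₀) hcont (fun y hy ↦ ?_)
      (left_mem_Icc.2 hlt.le) (right_mem_Icc.2 hlt.le) hlt
    rw [interior_Icc] at hy
    obtain ⟨hderiv, hy_sign⟩ := hball y (hsub (Ioo_subset_Icc_self hy))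
    rw [hderiv.deriv, ← sign_eq_neg_one_iff, hy_sign, sign_eq_neg_one_iff, sub_neg]
    exact hy.2
  · rw [uIcc_of_ge hgt.le] at hsub hcont
    refine strictMonoOn_of_deriv_pos (convex_Icc x₀ x) hcont (fun y hy ↦ ?_)
      (left_mem_Icc.2 hgt.le) (right_mem_Icc.2 hgt.le) hgt
    rw [interior_Icc] at hy
    obtain ⟨hderiv, hy_sign⟩ := hball y (hsub (Ioo_subset_Icc_self hy))
    rw [hderiv.deriv, ← sign_eq_one_iff, hy_sign, sign_eq_one_iff, sub_pos]
    exact hy.1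

noncomputable def cosSqrt (a c t : ℝ) : ℝ := cos (a * √(1 + c * t))

noncomputable def cosSqrtDeriv (a c t : ℝ) : ℝ :=
  -sin (a * √(1 + c * t)) * (a * c / 2) / √(1 + c * t)

theorem hasDerivAt_sqrt_one_add_mul {c t : ℝ} (h : 0 < 1 + c * t) :
    HasDerivAt (fun s ↦ √(1 + c * s)) (c / (2 * √(1 + c * t))) t :=
  (((hasDerivAt_id t).const_mul c).const_add 1).sqrt h.ne' |>.congr_deriv (by simp)

theorem hasDerivAt_cosSqrt {a c t : ℝ} (h : 0 < 1 + c * t) :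
    HasDerivAt (cosSqrt a c) (cosSqrtDeriv a c t) t := by
  refine ((hasDerivAt_sqrt_one_add_mul h).const_mul a).cos.congr_deriv ?_
  have hsqrt := (sqrt_pos.2 h).ne'
  simp only [cosSqrtDeriv]
  field_simp

theorem hasDerivAt_cosSqrtDeriv_zero (a c : ℝ) :
    HasDerivAt (cosSqrtDeriv a c) (a * c / 2 * (c / 2 * sin a - a * c / 2 * cos a)) 0 := by
  have hsqrt := hasDerivAt_sqrt_one_add_mul (c := c) (t := 0) (by simp)
  refine (((hsqrt.const_mul a).sin.neg.mul_const (a * c / 2)).div hsqrt (by simp)).congr_deriv ?_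
  simp only [mul_zero, add_zero, sqrt_one, mul_one, neg_mul, Pi.neg_apply, sub_neg_eq_add,
    one_pow, div_one]
  ring

theorem sin_ne_zero_and_cos_ne_zero_of_sin_two_mul_ne_zero {a : ℝ} (h : sin (2 * a) ≠ 0) :
    sin a ≠ 0 ∧ cos a ≠ 0 := by
  simpa [sin_two_mul, not_or] using h

noncomputable def normSqQ (a c t : ℝ) : ℝ :=
  (1 / sin (2 * a)) ^ 2 * (cosSqrt a c t ^ 2 + cosSqrt a (-c) t ^ 2
    - 2 * cos (2 * a) * cosSqrt a c t * cosSqrt a (-c) t)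

noncomputable def normSqQDeriv (a c t : ℝ) : ℝ :=
  (1 / sin (2 * a)) ^ 2 * (2 * cosSqrt a c t * cosSqrtDeriv a c t
    + 2 * cosSqrt a (-c) t * cosSqrtDeriv a (-c) t
    - 2 * cos (2 * a) * (cosSqrtDeriv a c t * cosSqrt a (-c) t
      + cosSqrt a c t * cosSqrtDeriv a (-c) t))

theorem normSqQ_zero {a : ℝ} (c : ℝ) (ha : sin (2 * a) ≠ 0) : normSqQ a c 0 = 1 := by
  obtain ⟨hs, hc⟩ := sin_ne_zero_and_cos_ne_zero_of_sin_two_mul_ne_zero ha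
  simp only [normSqQ, cosSqrt, cos_two_mul, sin_two_mul, mul_zero, add_zero, sqrt_one, mul_one]
  field_simp
  linear_combination (-4) * sin_sq_add_cos_sq a

theorem hasDerivAt_normSqQ (a : ℝ) {c t : ℝ} (h : |c * t| < 1) :
    HasDerivAt (normSqQ a c) (normSqQDeriv a c t) t := by
  obtain ⟨h₁, h₂⟩ := abs_lt.1 h
  have hp := hasDerivAt_cosSqrt (a := a) (by linarith : 0 < 1 + c * t)
  have hm := hasDerivAt_cosSqrt (a := a) (by linarith : 0 < 1 + -c * t)
  refine ((((hp.pow 2).add (hm.pow 2)).sub ((hp.const_mul (2 * cos (2 * a))).mul hm)).const_mul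
    _).congr_deriv ?_
  simp only [normSqQDeriv]
  ring

theorem normSqQDeriv_zero (a c : ℝ) : normSqQDeriv a c 0 = 0 := by
  simp only [normSqQDeriv, cosSqrt, cosSqrtDeriv, mul_zero, add_zero]
  ring

theorem hasDerivAt_normSqQDeriv_zero {a : ℝ} (c : ℝ) (ha : sin (2 * a) ≠ 0) :
    HasDerivAt (normSqQDeriv a c) (a * c ^ 2 / 2 * tan a) 0 := by
  obtain ⟨hs, hc⟩ := sin_ne_zero_and_cos_ne_zero_of_sin_two_mul_ne_zero ha
  have hp : HasDerivAt (cosSqrt a c) (cosSqrtDeriv a c 0) 0 := hasDerivAt_cosSqrt (by simp)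
  have hm : HasDerivAt (cosSqrt a (-c)) (cosSqrtDeriv a (-c) 0) 0 := hasDerivAt_cosSqrt (by simp)
  have hp' := hasDerivAt_cosSqrtDeriv_zero a c
  have hm' := hasDerivAt_cosSqrtDeriv_zero a (-c)
  refine ((((hp.const_mul 2).mul hp').add ((hm.const_mul 2).mul hm')).sub
    (((hp'.mul hm).add (hp.mul hm')).const_mul (2 * cos (2 * a)))).const_mul _ |>.congr_deriv ?_
  simp only [cosSqrt, cosSqrtDeriv, mul_zero, add_zero, sqrt_one, mul_one, div_one,
    tan_eq_sin_div_cos, cos_two_mul, sin_two_mul]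
  field_simp
  linear_combination a * c ^ 2 * (4 * a * cos a ^ 2 - 4 * sin a * cos a) * sin_sq_add_cos_sq a

theorem stmt16 (k : ℕ) (hk : 1 ≤ k) (θ₀ θinf Q : ℝ → ℝ)
    (hθ₀ : ∀ t, θ₀ t = (π / (2*(k:ℝ)+2)) * ((k:ℝ) * Real.sqrt (1 + 4*t*((k:ℝ)+1)/(k:ℝ))))
    (hθinf : ∀ t, θinf t = (π / (2*(k:ℝ)+2)) * ((k:ℝ) * Real.sqrt (1 - 4*t*((k:ℝ)+1)/(k:ℝ))))
    (hQ : ∀ t, Q t = (1 / (Real.sin ((k:ℝ)*π/((k:ℝ)+1)))^2) *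
        ((Real.cos (θ₀ t))^2 + (Real.cos (θinf t))^2
          - 2 * Real.cos ((k:ℝ)*π/((k:ℝ)+1)) * Real.cos (θ₀ t) * Real.cos (θinf t))) :
    Q 0 = 1 ∧ deriv Q 0 = 0 ∧
    deriv (deriv Q) 0 = (4*((k:ℝ)+1)*π/(k:ℝ)) * Real.tan ((k:ℝ)*π/(2*(k:ℝ)+2)) ∧
    0 < (4*((k:ℝ)+1)*π/(k:ℝ)) * Real.tan ((k:ℝ)*π/(2*(k:ℝ)+2)) ∧
    ∃ ε > (0:ℝ), ∀ t : ℝ, t ≠ 0 → |t| < ε → 1 < Q t := by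
  have hk₀ : (0 : ℝ) < k := by exact_mod_cast hk
  set a : ℝ := k * π / (2 * k + 2) with ha_def
  set c : ℝ := 4 * (k + 1) / k with hc_def
  have ha₀ : 0 < a := by positivity
  have ha : a < π / 2 := by
    rw [div_lt_div_iff₀ (by positivity) two_pos]
    nlinarith [pi_pos]
  have h2a : k * π / (k + 1) = 2 * a := by rw [ha_def]; field_simp
  have hsin : sin (2 * a) ≠ 0 :=
    (sin_pos_of_pos_of_lt_pi (x := 2 * a) (by positivity) (by linarith)).ne'
  obtain rfl : Q = normSqQ a c := by
    ext t
    have h₀ : 1 + 4 * t * (k + 1) / k = 1 + c * t := by rw [hc_def]; ring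
    have hinf : 1 - 4 * t * (k + 1) / k = 1 + -c * t := by rw [hc_def]; ring
    have hθ (s : ℝ) : π / (2 * k + 2) * (k * s) = a * s := by rw [ha_def]; ring
    rw [hQ, hθ₀, hθinf, h2a, h₀, hinf, hθ, hθ, normSqQ, cosSqrt, cosSqrt, one_div_pow]
  have hderiv : ∀ᶠ t in 𝓝 0, HasDerivAt (normSqQ a c) (normSqQDeriv a c t) t := by
    filter_upwards [((continuous_const_mul c).abs.tendsto' 0 0 (by simp)).eventually
      (eventually_lt_nhds one_pos)] with t ht
    exact hasDerivAt_normSqQ a ht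
  have hcoeff : a * c ^ 2 / 2 = 4 * (k + 1) * π / k := by rw [ha_def, hc_def]; field_simp; ring
  have hcurv : HasDerivAt (normSqQDeriv a c) (4 * (k + 1) * π / k * tan a) 0 :=
    hcoeff ▸ hasDerivAt_normSqQDeriv_zero c hsin
  have hpos : 0 < 4 * (k + 1) * π / k * tan a :=
    mul_pos (by positivity) (tan_pos_of_pos_of_lt_pi_div_two ha₀ ha)
  have hmin :=
    eventually_nhdsNE_lt_of_hasDerivAt_deriv_pos hderiv (normSqQDeriv_zero a c) hcurv hpos
  rw [normSqQ_zero c hsin] at hmin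
  obtain ⟨ε, hε, hball⟩ := Metric.eventually_nhds_iff.1 (eventually_nhdsWithin_iff.1 hmin)
  refine ⟨normSqQ_zero c hsin, ?_, ?_, hpos, ε, hε, fun t ht₀ ht ↦ hball (by simpa using ht) ht₀⟩
  · rw [hderiv.self_of_nhds.deriv, normSqQDeriv_zero]
  · rw [EventuallyEq.deriv_eq (hderiv.mono fun t ht ↦ ht.deriv), hcurv.deriv]
end
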